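/- arXiv:math/0511443 — 2 statements merged into one kernel-verified Lean document; each statement's English description precedes it below -/
import Mathlib

section
/- Set F(v) = r²cos²(v) + k²sin²(v). For all (u,v) ∈ ℝ² the partial derivatives of Ĩ satisfy: ⟨∂Ĩ/∂u, ∂Ĩ/∂v⟩ = 0, ‖∂Ĩ/∂u‖² = (F(v)² + r²k²)/F(v), and ‖∂Ĩ/∂v‖² = (F(v)² + r²k²)/F(v)². In other words, the metric induced on the bipolar surface τ̃_{r,k} is ((F² + r²k²)/F)(du² + dv²/F). -/
/-!
Write `Ĩ = W / D`. By the product-to-sum formulas in the angles `k u` and `r u`, the last four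
coordinates of `W` are, in a rotated orthonormal basis, two circles of radii `√2 S` and `√2 T`
(`S, T = (r cos²v ± k sin²v)/2`) traversed with angular speeds `k + r` and `k - r`, while the
first two coordinates do not depend on `u`; moreover `|W| = D`. Hence `∂ᵤW` turns both circles
by a quarter turn, which makes it orthogonal to `W` and to `∂ᵥW`, and its length is read off
from the radii. For `∂ᵥĨ` one uses that the derivative of a curve `w / |w|` has squared length
`(|w'|² - |w|'²) / |w|²`.
-/

open Real

/-- The normalizing factor `D(v) = sqrt(r²cos²v + k²sin²v)`. -/
noncomputable def lawsonD (r k : ℝ) (v : ℝ) : ℝ :=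
  Real.sqrt (r ^ 2 * cos v ^ 2 + k ^ 2 * sin v ^ 2)

/-- The bipolar surface map `Ĩ : ℝ² → ℝ⁶` of the Lawson surface `τ_{r,k}`. -/
noncomputable def bipolarI (r k : ℝ) (u v : ℝ) : Fin 6 → ℝ := fun i =>
  ![-(k * sin v * cos v),
    r * sin v * cos v,
    -(r * cos v ^ 2 * sin (k * u) * cos (r * u)) - k * sin v ^ 2 * sin (r * u) * cos (k * u),
    r * cos v ^ 2 * sin (r * u) * cos (k * u) + k * sin v ^ 2 * sin (k * u) * cos (r * u),
    -(r * cos v ^ 2 * sin (k * u) * sin (r * u)) + k * sin v ^ 2 * cos (r * u) * cos (k * u),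
    r * cos v ^ 2 * cos (k * u) * cos (r * u) - k * sin v ^ 2 * sin (r * u) * sin (k * u)] i
    / lawsonD r k v

/-- `F(v) = r²cos²v + k²sin²v`. -/
noncomputable def lawsonF (r k : ℝ) (v : ℝ) : ℝ := r ^ 2 * cos v ^ 2 + k ^ 2 * sin v ^ 2

section Normalization

variable {ι : Type*} [Fintype ι] {w : ι → ℝ → ℝ} {w' : ι → ℝ} {d : ℝ → ℝ} {d' t : ℝ}

theorem sum_mul_deriv_eq_of_sum_sq_eq (hw : ∀ i, HasDerivAt (w i) (w' i) t)
    (hd : HasDerivAt d d' t) (hnorm : ∀ s, ∑ i, w i s ^ 2 = d s ^ 2) :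
    ∑ i, w i t * w' i = d t * d' := by
  have hsum : HasDerivAt (fun s => d s ^ 2) (∑ i, 2 * (w i t * w' i)) t := by
    simp_rw [← hnorm]
    exact (HasDerivAt.fun_sum fun i _ => (hw i).pow 2).congr_deriv
      (Finset.sum_congr rfl fun i _ => by rw [Nat.cast_ofNat, pow_one]; ring)
  have := hsum.unique (hd.pow 2)
  rw [← Finset.mul_sum] at this
  linear_combination this / 2

theorem sum_sq_deriv_div_of_sum_sq_eq (hw : ∀ i, HasDerivAt (w i) (w' i) t)
    (hd : HasDerivAt d d' t) (hd0 : d t ≠ 0) (hnorm : ∀ s, ∑ i, w i s ^ 2 = d s ^ 2) :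
    ∑ i, deriv (fun s => w i s / d s) t ^ 2 = (∑ i, w' i ^ 2 - d' ^ 2) / d t ^ 2 := by
  have hderiv (i : ι) : deriv (fun s => w i s / d s) t = (w' i * d t - w i t * d') / d t ^ 2 :=
    ((hw i).div hd hd0).deriv
  simp_rw [hderiv]
  calc ∑ i, ((w' i * d t - w i t * d') / d t ^ 2) ^ 2
      = (d t ^ 2 * ∑ i, w' i ^ 2 - 2 * d t * d' * ∑ i, w i t * w' i
          + d' ^ 2 * ∑ i, w i t ^ 2) / d t ^ 4 := by
        simp only [Finset.mul_sum, ← Finset.sum_sub_distrib, ← Finset.sum_add_distrib,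
          Finset.sum_div]
        exact Finset.sum_congr rfl fun i _ => by field_simp; ring
    _ = (∑ i, w' i ^ 2 - d' ^ 2) / d t ^ 2 := by
        rw [sum_mul_deriv_eq_of_sum_sq_eq hw hd hnorm, hnorm]; field_simp; ring

theorem sum_mul_deriv_div_eq_zero {a : ι → ℝ} (hw : ∀ i, HasDerivAt (w i) (w' i) t)
    (hd : HasDerivAt d d' t) (hd0 : d t ≠ 0) (ha : ∑ i, a i * w i t = 0)
    (ha' : ∑ i, a i * w' i = 0) :
    ∑ i, a i * deriv (fun s => w i s / d s) t = 0 := by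
  have hderiv (i : ι) : deriv (fun s => w i s / d s) t = (w' i * d t - w i t * d') / d t ^ 2 :=
    ((hw i).div hd hd0).deriv
  simp_rw [hderiv]
  calc ∑ i, a i * ((w' i * d t - w i t * d') / d t ^ 2)
      = (d t * ∑ i, a i * w' i - d' * ∑ i, a i * w i t) / d t ^ 2 := by
        simp only [Finset.mul_sum, ← Finset.sum_sub_distrib, Finset.sum_div]
        exact Finset.sum_congr rfl fun i _ => by ring
    _ = 0 := by rw [ha, ha']; simp

end Normalization

/-- In the orthonormal basis `(e₄ + e₅)/√2, (e₃ - e₂)/√2, (e₅ - e₄)/√2, (e₂ + e₃)/√2` of the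
last four coordinates (indexed from `0`) this is `√2 S (cos σ, sin σ)` followed by `√2 T (cos δ, -sin δ)`. -/
noncomputable def bipolarVec (a b S T σ δ : ℝ) : Fin 6 → ℝ :=
  ![a, b, -(S * sin σ) - T * sin δ, S * sin σ - T * sin δ, S * cos σ - T * cos δ,
    S * cos σ + T * cos δ]

theorem sum_bipolarVec_mul (a b S T σ δ a' b' S' T' σ' δ' : ℝ) :
    ∑ i, bipolarVec a b S T σ δ i * bipolarVec a' b' S' T' σ' δ' i =
      a * a' + b * b' + 2 * (S * S' * cos (σ - σ') + T * T' * cos (δ - δ')) := by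
  simp only [Fin.sum_univ_succ, Fin.sum_univ_zero, bipolarVec, cos_sub, Fin.isValue,
    Matrix.cons_val_zero, Fin.succ_zero_eq_one, Matrix.cons_val_one, Fin.succ_one_eq_two,
    Matrix.cons_val, Fin.reduceSucc]
  ring

theorem sum_bipolarVec_sq (a b S T σ δ : ℝ) :
    ∑ i, bipolarVec a b S T σ δ i ^ 2 = a ^ 2 + b ^ 2 + 2 * (S ^ 2 + T ^ 2) := by
  simp only [sq, sum_bipolarVec_mul, sub_self, cos_zero]
  ring

theorem hasDerivAt_bipolarVec_angles (a b S T m n u : ℝ) (i : Fin 6) :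
    HasDerivAt (fun u => bipolarVec a b S T (m * u) (n * u) i)
      (bipolarVec 0 0 (m * S) (n * T) (m * u + π / 2) (n * u + π / 2) i) u := by
  have hsin (c : ℝ) : HasDerivAt (fun u => sin (c * u)) (c * cos (c * u)) u := by
    simpa [mul_comm] using ((hasDerivAt_id u).const_mul c).sin
  have hcos (c : ℝ) : HasDerivAt (fun u => cos (c * u)) (-(c * sin (c * u))) u := by
    simpa [mul_comm] using ((hasDerivAt_id u).const_mul c).cos
  fin_cases i <;>
    simp only [bipolarVec, Fin.zero_eta, Fin.mk_one, Fin.reduceFinMk, Fin.isValue,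
      Matrix.cons_val_zero, Matrix.cons_val_one, Matrix.cons_val, sin_add_pi_div_two,
      cos_add_pi_div_two]
  · exact hasDerivAt_const _ _
  · exact hasDerivAt_const _ _
  · exact (((hsin m).const_mul S).neg.sub ((hsin n).const_mul T)).congr_deriv (by ring)
  · exact (((hsin m).const_mul S).sub ((hsin n).const_mul T)).congr_deriv (by ring)
  · exact (((hcos m).const_mul S).sub ((hcos n).const_mul T)).congr_deriv (by ring)
  · exact (((hcos m).const_mul S).add ((hcos n).const_mul T)).congr_deriv (by ring)

theorem hasDerivAt_bipolarVec_coeffs {a b S T : ℝ → ℝ} {a' b' S' T' v : ℝ}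
    (ha : HasDerivAt a a' v) (hb : HasDerivAt b b' v) (hS : HasDerivAt S S' v)
    (hT : HasDerivAt T T' v) (σ δ : ℝ) (i : Fin 6) :
    HasDerivAt (fun v => bipolarVec (a v) (b v) (S v) (T v) σ δ i)
      (bipolarVec a' b' S' T' σ δ i) v := by
  fin_cases i <;>
    simp only [bipolarVec, Fin.zero_eta, Fin.mk_one, Fin.reduceFinMk, Fin.isValue,
      Matrix.cons_val_zero, Matrix.cons_val_one, Matrix.cons_val]
  · exact ha
  · exact hb
  · exact (hS.mul_const _).neg.sub (hT.mul_const _)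
  · exact (hS.mul_const _).sub (hT.mul_const _)
  · exact (hS.mul_const _).sub (hT.mul_const _)
  · exact (hS.mul_const _).add (hT.mul_const _)

-- The radii produced by the product-to-sum formulas, see `bipolarI_apply`.
noncomputable def lawsonS (r k v : ℝ) : ℝ := (r * cos v ^ 2 + k * sin v ^ 2) / 2

noncomputable def lawsonT (r k v : ℝ) : ℝ := (r * cos v ^ 2 - k * sin v ^ 2) / 2

noncomputable def bipolarNum (r k u v : ℝ) : Fin 6 → ℝ :=
  bipolarVec (-k * (sin v * cos v)) (r * (sin v * cos v)) (lawsonS r k v) (lawsonT r k v)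
    ((k + r) * u) ((k - r) * u)

theorem bipolarI_apply (r k u v : ℝ) (i : Fin 6) :
    bipolarI r k u v i = bipolarNum r k u v i / lawsonD r k v := by
  simp only [bipolarI, bipolarNum, bipolarVec, lawsonS, lawsonT, add_mul, sub_mul, sin_add,
    sin_sub, cos_add, cos_sub]
  congr 1
  fin_cases i <;>
    simp only [Fin.zero_eta, Fin.mk_one, Fin.reduceFinMk, Fin.isValue, Matrix.cons_val_zero,
      Matrix.cons_val_one, Matrix.cons_val] <;>
    ring

theorem lawsonD_sq (r k v : ℝ) : lawsonD r k v ^ 2 = lawsonF r k v :=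
  sq_sqrt (by positivity)

theorem lawsonD_pos {r k v : ℝ} (hF : 0 < lawsonF r k v) : 0 < lawsonD r k v :=
  sqrt_pos.mpr hF

theorem lawsonF_pos {r k : ℝ} (hr : r ≠ 0) (hk : k ≠ 0) (v : ℝ) : 0 < lawsonF r k v := by
  rcases eq_or_ne (cos v) 0 with hc | hc
  · have hs : sin v ^ 2 = 1 := by nlinarith [sin_sq_add_cos_sq v]
    rw [lawsonF, hc, hs]
    positivity
  · unfold lawsonF; positivity

theorem sum_bipolarNum_sq (r k u v : ℝ) : ∑ i, bipolarNum r k u v i ^ 2 = lawsonD r k v ^ 2 := by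
  rw [bipolarNum, sum_bipolarVec_sq, lawsonD_sq, lawsonF, lawsonS, lawsonT]
  linear_combination (r ^ 2 * cos v ^ 2 + k ^ 2 * sin v ^ 2) * sin_sq_add_cos_sq v

theorem hasDerivAt_lawsonD {r k v : ℝ} (hF : lawsonF r k v ≠ 0) :
    HasDerivAt (lawsonD r k) ((k ^ 2 - r ^ 2) * (sin v * cos v) / lawsonD r k v) v := by
  have hF' : HasDerivAt (lawsonF r k) (2 * (k ^ 2 - r ^ 2) * (sin v * cos v)) v :=
    ((((hasDerivAt_cos v).pow 2).const_mul (r ^ 2)).add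
      (((hasDerivAt_sin v).pow 2).const_mul (k ^ 2))).congr_deriv (by ring)
  refine (hF'.sqrt hF).congr_deriv ?_
  rw [lawsonD, lawsonF]
  field_simp

theorem hasDerivAt_bipolarNum_v (r k u v : ℝ) (i : Fin 6) :
    HasDerivAt (fun v => bipolarNum r k u v i)
      (bipolarVec (-k * (cos v ^ 2 - sin v ^ 2)) (r * (cos v ^ 2 - sin v ^ 2))
        ((k - r) * (sin v * cos v)) (-(k + r) * (sin v * cos v)) ((k + r) * u) ((k - r) * u) i)
      v := by
  have hsc : HasDerivAt (fun v => sin v * cos v) (cos v ^ 2 - sin v ^ 2) v :=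
    ((hasDerivAt_sin v).mul (hasDerivAt_cos v)).congr_deriv (by ring)
  have hS : HasDerivAt (lawsonS r k) ((k - r) * (sin v * cos v)) v :=
    (((((hasDerivAt_cos v).pow 2).const_mul r).add
      (((hasDerivAt_sin v).pow 2).const_mul k)).div_const 2).congr_deriv (by ring)
  have hT : HasDerivAt (lawsonT r k) (-(k + r) * (sin v * cos v)) v :=
    (((((hasDerivAt_cos v).pow 2).const_mul r).sub
      (((hasDerivAt_sin v).pow 2).const_mul k)).div_const 2).congr_deriv (by ring)
  exact hasDerivAt_bipolarVec_coeffs (hsc.const_mul _) (hsc.const_mul _) hS hT _ _ i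

theorem deriv_bipolarI_u (r k u v : ℝ) (i : Fin 6) :
    deriv (fun u' => bipolarI r k u' v i) u =
      bipolarVec 0 0 ((k + r) * lawsonS r k v) ((k - r) * lawsonT r k v)
        ((k + r) * u + π / 2) ((k - r) * u + π / 2) i / lawsonD r k v := by
  simp_rw [bipolarI_apply, bipolarNum]
  exact ((hasDerivAt_bipolarVec_angles _ _ _ _ _ _ u i).div_const _).deriv

theorem sum_sq_deriv_bipolarI_u (r k u v : ℝ) :
    ∑ i, deriv (fun u' => bipolarI r k u' v i) u ^ 2 =
      (lawsonF r k v ^ 2 + r ^ 2 * k ^ 2) / lawsonF r k v := by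
  simp_rw [deriv_bipolarI_u, div_pow, ← Finset.sum_div, sum_bipolarVec_sq, lawsonD_sq]
  congr 1
  rw [lawsonF, lawsonS, lawsonT]
  linear_combination r ^ 2 * k ^ 2 * (sin v ^ 2 + cos v ^ 2 + 1) * sin_sq_add_cos_sq v

theorem sum_deriv_bipolarI_u_mul_v {r k : ℝ} (u : ℝ) {v : ℝ} (hF : 0 < lawsonF r k v) :
    ∑ i, deriv (fun u' => bipolarI r k u' v i) u * deriv (fun v' => bipolarI r k u v' i) v =
      0 := by
  simp_rw [deriv_bipolarI_u, bipolarI_apply]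
  refine sum_mul_deriv_div_eq_zero (hasDerivAt_bipolarNum_v r k u v) (hasDerivAt_lawsonD hF.ne')
    (lawsonD_pos hF).ne' ?_ ?_ <;>
    simp only [div_mul_eq_mul_div, ← Finset.sum_div, bipolarNum, sum_bipolarVec_mul,
      add_sub_cancel_left, cos_pi_div_two] <;>
    ring

theorem sum_sq_deriv_bipolarI_v {r k : ℝ} (u : ℝ) {v : ℝ} (hF : 0 < lawsonF r k v) :
    ∑ i, deriv (fun v' => bipolarI r k u v' i) v ^ 2 =
      (lawsonF r k v ^ 2 + r ^ 2 * k ^ 2) / lawsonF r k v ^ 2 := by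
  simp_rw [bipolarI_apply]
  rw [sum_sq_deriv_div_of_sum_sq_eq (hasDerivAt_bipolarNum_v r k u v) (hasDerivAt_lawsonD hF.ne')
    (lawsonD_pos hF).ne' (sum_bipolarNum_sq r k u), sum_bipolarVec_sq, div_pow, lawsonD_sq]
  field_simp
  rw [lawsonF]
  linear_combination ((k ^ 2 + r ^ 2) * (r ^ 2 * cos v ^ 2 + k ^ 2 * sin v ^ 2)
    * (sin v ^ 2 + cos v ^ 2 + 1) + r ^ 2 * k ^ 2 - r ^ 4 * cos v ^ 2 - k ^ 4 * sin v ^ 2)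
    * sin_sq_add_cos_sq v

/-- The induced metric on the bipolar surface is `((F² + r²k²)/F)(du² + dv²/F)`. -/
theorem stmt_2 (r k : ℤ) (hk : 0 < k) (hrk : k < r) (u v : ℝ) :
    (∑ i : Fin 6,
        deriv (fun u' => bipolarI r k u' v i) u * deriv (fun v' => bipolarI r k u v' i) v = 0) ∧
    (∑ i : Fin 6, (deriv (fun u' => bipolarI r k u' v i) u) ^ 2 =
      (lawsonF r k v ^ 2 + (r : ℝ) ^ 2 * (k : ℝ) ^ 2) / lawsonF r k v) ∧
    (∑ i : Fin 6, (deriv (fun v' => bipolarI r k u v' i) v) ^ 2 =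
      (lawsonF r k v ^ 2 + (r : ℝ) ^ 2 * (k : ℝ) ^ 2) / lawsonF r k v ^ 2) := by
  have hr : (r : ℝ) ≠ 0 := by exact_mod_cast (hk.trans hrk).ne'
  have hF : 0 < lawsonF r k v := lawsonF_pos hr (by exact_mod_cast hk.ne') v
  exact ⟨sum_deriv_bipolarI_u_mul_v u hF, sum_sq_deriv_bipolarI_u r k u v,
    sum_sq_deriv_bipolarI_v u hF⟩
end

section
/- The function θ is a strictly increasing bijection of ℝ onto ℝ (since θ' ≥ sqrt(n² − m²) > 0). Moreover, let p, λ ∈ ℝ and suppose φ : ℝ → ℝ satisfies the Hill equation φ''(y) + (λ f(y) − p²)φ(y) = 0, where f(y) = (m²+n²)/2 − m²cos²(θ(y)). Then the function ψ = φ ∘ θ⁻¹ satisfies the Ince-type equation (n² − m²cos²(s))·ψ''(s) + m² sin(s)cos(s)·ψ'(s) + (λ((m²+n²)/2 − m²cos²(s)) − p²)·ψ(s) = 0 for all s ∈ ℝ. -/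
/-!
Since `θ' = F ∘ θ` with `F s = √(n² − m² cos² s) ≥ √(n² − m²) > 0`, the function `θ` grows at
least linearly in both directions, so it is an increasing homeomorphism of `ℝ`, and its inverse
`g` satisfies `g' = 1 / F`. For `ψ = φ ∘ g` the chain rule gives `ψ' = (φ' ∘ g) / F`, and
differentiating once more, `F² ψ'' + F F' ψ' = φ'' ∘ g`. Finally `F² = n² − m² cos² s` and
`F F' = (F²)' / 2 = m² sin s cos s`, so the Hill equation at `g s` is the Ince equation at `s`.
-/

open Real Function Filter

theorem surjective_of_const_le_deriv {f : ℝ → ℝ} (hf : Differentiable ℝ f) {c : ℝ} (hc : 0 < c)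
    (hle : ∀ x, c ≤ deriv f x) : Surjective f := by
  have hmono : Monotone fun x => f x - c * x := by
    refine monotone_of_deriv_nonneg (by fun_prop) fun x => ?_
    have : HasDerivAt (fun x => f x - c * x) (deriv f x - c * 1) x :=
      (hf x).hasDerivAt.sub ((hasDerivAt_id' x).const_mul c)
    linarith [this.deriv, hle x]
  have hlin_top : Tendsto (fun x => f 0 + c * x) atTop atTop :=
    tendsto_atTop_add_const_left _ _ (tendsto_id.const_mul_atTop hc)
  have hlin_bot : Tendsto (fun x => f 0 + c * x) atBot atBot :=
    tendsto_atBot_add_const_left _ _ (tendsto_id.const_mul_atBot hc)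
  refine hf.continuous.surjective (tendsto_atTop_mono' _ ?_ hlin_top)
    (tendsto_atBot_mono' _ ?_ hlin_bot)
  · filter_upwards [eventually_ge_atTop 0] with x hx
    linarith [hmono hx]
  · filter_upwards [eventually_le_atBot 0] with x hx
    linarith [hmono hx]

theorem StrictMono.continuous_invFun {α β : Type*} [LinearOrder α] [TopologicalSpace α]
    [OrderTopology α] [Nonempty α] [LinearOrder β] [TopologicalSpace β] [OrderTopology β]
    {f : α → β} (hf : StrictMono f) (hsurj : Surjective f) : Continuous (invFun f) := by
  have : invFun f = (hf.orderIsoOfSurjective f hsurj).symm := funext fun b =>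
    hf.injective <| (rightInverse_invFun hsurj b).trans
      (hf.orderIsoOfSurjective_self_symm_apply f hsurj b).symm
  rw [this]
  exact (hf.orderIsoOfSurjective f hsurj).symm.continuous

theorem hasDerivAt_invFun_of_deriv_eq {f F : ℝ → ℝ} (hf : Differentiable ℝ f) (hmono : StrictMono f)
    (hsurj : Surjective f) (hF : ∀ x, deriv f x = F (f x)) {s : ℝ} (hs : F s ≠ 0) :
    HasDerivAt (invFun f) (F s)⁻¹ s := by
  have hfg : ∀ t, f (invFun f t) = t := rightInverse_invFun hsurj
  have hderiv : HasDerivAt f (F s) (invFun f s) := by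
    simpa only [hF, hfg] using (hf (invFun f s)).hasDerivAt
  exact hderiv.of_local_left_inverse (hmono.continuous_invFun hsurj).continuousAt hs
    (.of_forall hfg)

theorem sq_mul_deriv_deriv_comp_add {φ g F : ℝ → ℝ} {F' s : ℝ} (hφ : Differentiable ℝ φ)
    (hφ' : DifferentiableAt ℝ (deriv φ) (g s)) (hg : ∀ u, HasDerivAt g (F u)⁻¹ u)
    (hF : HasDerivAt F F' s) (hFs : F s ≠ 0) :
    F s ^ 2 * deriv (deriv (φ ∘ g)) s + F s * F' * deriv (φ ∘ g) s = deriv (deriv φ) (g s) := by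
  have hψ' : deriv (φ ∘ g) = fun u => deriv φ (g u) * (F u)⁻¹ :=
    funext fun u => ((hφ (g u)).hasDerivAt.comp u (hg u)).deriv
  have hψ'' : HasDerivAt (deriv (φ ∘ g))
      (deriv (deriv φ) (g s) * (F s)⁻¹ * (F s)⁻¹ + deriv φ (g s) * (-F' / F s ^ 2)) s := by
    rw [hψ']
    exact (hφ'.hasDerivAt.comp s (hg s)).mul (hF.inv hFs)
  rw [hψ''.deriv, hψ']
  field_simp
  ring

theorem hasDerivAt_sqrt_sub_mul_cos_sq {a b s : ℝ} (h : a - b * cos s ^ 2 ≠ 0) :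
    HasDerivAt (fun u => √(a - b * cos u ^ 2)) (b * sin s * cos s / √(a - b * cos s ^ 2)) s := by
  have hinner : HasDerivAt (fun u => a - b * cos u ^ 2) (2 * b * sin s * cos s) s :=
    ((((hasDerivAt_cos s).pow 2).const_mul b).const_sub a).congr_deriv (by push_cast; ring)
  exact ((hasDerivAt_sqrt h).comp s hinner).congr_deriv (by field_simp)

theorem stmt_17_general (n m : ℝ) (hm : 0 < m) (hmn : m < n) (θ : ℝ → ℝ)
    (hθdiff : Differentiable ℝ θ)
    (hθ' : ∀ y, deriv θ y = Real.sqrt (n ^ 2 - m ^ 2 * Real.cos (θ y) ^ 2))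
    (p lam : ℝ) (φ : ℝ → ℝ)
    (hφ : Differentiable ℝ φ) (hφ' : Differentiable ℝ (deriv φ))
    (odeφ : ∀ y, deriv (deriv φ) y
      + (lam * ((m ^ 2 + n ^ 2) / 2 - m ^ 2 * Real.cos (θ y) ^ 2) - p ^ 2) * φ y = 0) :
    StrictMono θ ∧ Function.Bijective θ ∧
    ∀ s : ℝ,
      (n ^ 2 - m ^ 2 * Real.cos s ^ 2) * deriv (deriv (φ ∘ Function.invFun θ)) s
        + m ^ 2 * Real.sin s * Real.cos s * deriv (φ ∘ Function.invFun θ) s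
        + (lam * ((m ^ 2 + n ^ 2) / 2 - m ^ 2 * Real.cos s ^ 2) - p ^ 2)
          * (φ ∘ Function.invFun θ) s = 0 := by
  have hD : ∀ s, 0 < n ^ 2 - m ^ 2 * cos s ^ 2 := fun s => by
    nlinarith [cos_sq_le_one s, sq_nonneg (cos s)]
  have hmono : StrictMono θ :=
    strictMono_of_deriv_pos fun y => by rw [hθ' y]; exact sqrt_pos.2 (hD _)
  have hsurj : Surjective θ :=
    surjective_of_const_le_deriv hθdiff (c := √(n ^ 2 - m ^ 2)) (sqrt_pos.2 (by nlinarith))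
      fun y => by rw [hθ' y]; exact sqrt_le_sqrt (by nlinarith [cos_sq_le_one (θ y)])
  refine ⟨hmono, ⟨hmono.injective, hsurj⟩, fun s => ?_⟩
  have hsqrt_ne : √(n ^ 2 - m ^ 2 * cos s ^ 2) ≠ 0 := (sqrt_pos.2 (hD s)).ne'
  have hchange := sq_mul_deriv_deriv_comp_add hφ (hφ' _)
    (fun u => hasDerivAt_invFun_of_deriv_eq (F := fun t => √(n ^ 2 - m ^ 2 * cos t ^ 2))
      hθdiff hmono hsurj hθ' (sqrt_pos.2 (hD u)).ne')
    (hasDerivAt_sqrt_sub_mul_cos_sq (hD s).ne') hsqrt_ne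
  rw [sq_sqrt (hD s).le, mul_div_cancel₀ _ hsqrt_ne] at hchange
  have hode := odeφ (invFun θ s)
  rw [rightInverse_invFun hsurj s] at hode
  rw [comp_apply, hchange, hode]

/-- `θ` is a strictly increasing bijection of `ℝ`, and the change of variable `s = θ(y)`
turns the Hill equation `φ'' + (λf − p²)φ = 0` into an Ince-type equation for
`ψ = φ ∘ θ⁻¹`. -/
theorem stmt_17 (n m : ℝ) (hm : 0 < m) (hmn : m < n) (θ : ℝ → ℝ)
    (hθ0 : θ 0 = 0) (hθdiff : Differentiable ℝ θ)
    (hθ' : ∀ y, deriv θ y = Real.sqrt (n ^ 2 - m ^ 2 * Real.cos (θ y) ^ 2))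
    (p lam : ℝ) (φ : ℝ → ℝ)
    (hφ : Differentiable ℝ φ) (hφ' : Differentiable ℝ (deriv φ))
    (odeφ : ∀ y, deriv (deriv φ) y
      + (lam * ((m ^ 2 + n ^ 2) / 2 - m ^ 2 * Real.cos (θ y) ^ 2) - p ^ 2) * φ y = 0) :
    StrictMono θ ∧ Function.Bijective θ ∧
    ∀ s : ℝ,
      (n ^ 2 - m ^ 2 * Real.cos s ^ 2) * deriv (deriv (φ ∘ Function.invFun θ)) s
        + m ^ 2 * Real.sin s * Real.cos s * deriv (φ ∘ Function.invFun θ) s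
        + (lam * ((m ^ 2 + n ^ 2) / 2 - m ^ 2 * Real.cos s ^ 2) - p ^ 2)
          * (φ ∘ Function.invFun θ) s = 0 :=
  stmt_17_general n m hm hmn θ hθdiff hθ' p lam φ hφ hφ' odeφ
end
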